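/- arXiv:2401.10066 — 2 statements merged into one kernel-verified Lean document; each statement's English description precedes it below -/
import Mathlib

section
/- Let Ω ⊆ ℝ² be open and let (φ_k) be a sequence of twice continuously differentiable maps ℝ² → ℝ² such that sup_{x∈Ω} ‖Dφ_k(x) − I‖ → 0 and sup_{x∈Ω} ‖D²φ_k(x)‖ → 0 as k → ∞. Whenever Dφ_k(x) is invertible, let M_k(x) := Dφ_k(x)^{−1} (Dφ_k(x)^{−1})^T · |det Dφ_k(x)| − I, a 2×2 real matrix with entries a_k(x), b_k(x) (first row) and c_k(x), d_k(x) (second row). Then for every ε > 0 there exists K such that for all k ≥ K: Dφ_k(x) is invertible for every x ∈ Ω, the entry functions a_k, b_k, c_k, d_k are differentiable on Ω, and sup_{x∈Ω} |∂a_k/∂x₁ + ∂b_k/∂x₂| ≤ ε and sup_{x∈Ω} |∂c_k/∂x₁ + ∂d_k/∂x₂| ≤ ε. -/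
open Matrix

set_option maxHeartbeats 1000000

noncomputable section

/-- The standard basis of `ℝ²` (as a Euclidean space). -/
def stdBasis : Module.Basis (Fin 2) ℝ (EuclideanSpace ℝ (Fin 2)) :=
  (EuclideanSpace.basisFun (Fin 2) ℝ).toBasis

/-- The Jacobian matrix of `φ` at `x`, in the standard basis. -/
def jacobianMatrix (φ : EuclideanSpace ℝ (Fin 2) → EuclideanSpace ℝ (Fin 2))
    (x : EuclideanSpace ℝ (Fin 2)) : Matrix (Fin 2) (Fin 2) ℝ :=
  LinearMap.toMatrix stdBasis stdBasis (fderiv ℝ φ x : EuclideanSpace ℝ (Fin 2) →ₗ[ℝ] EuclideanSpace ℝ (Fin 2))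

/-- The matrix `M_φ(x) = Dφ(x)⁻¹ (Dφ(x)⁻¹)ᵀ |det Dφ(x)| − I`. -/
def Mmat (φ : EuclideanSpace ℝ (Fin 2) → EuclideanSpace ℝ (Fin 2))
    (x : EuclideanSpace ℝ (Fin 2)) : Matrix (Fin 2) (Fin 2) ℝ :=
  |(jacobianMatrix φ x).det| •
    ((jacobianMatrix φ x)⁻¹ * ((jacobianMatrix φ x)⁻¹)ᵀ) - 1

/-! ### Auxiliary lemmas -/

abbrev E2 := EuclideanSpace ℝ (Fin 2)

lemma Mentry (A : Matrix (Fin 2) (Fin 2) ℝ) (h : 0 < A.det) (i j : Fin 2) :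
    (|A.det| • (A⁻¹ * A⁻¹ᵀ) - 1 : Matrix (Fin 2) (Fin 2) ℝ) i j
      = (!![A 0 1 * A 0 1 + A 1 1 * A 1 1, -(A 0 0 * A 0 1 + A 1 0 * A 1 1);
           -(A 0 0 * A 0 1 + A 1 0 * A 1 1), A 0 0 * A 0 0 + A 1 0 * A 1 0] i j) * (A.det)⁻¹
        - (1 : Matrix (Fin 2) (Fin 2) ℝ) i j := by
  have h0 : A.det ≠ 0 := ne_of_gt h
  rw [abs_of_pos h, Matrix.inv_def, Ring.inverse_eq_inv']
  rw [Matrix.det_fin_two] at h0 ⊢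
  fin_cases i <;> fin_cases j <;>
    · simp [Matrix.sub_apply, Matrix.smul_apply, Matrix.mul_apply, Fin.sum_univ_two,
        Matrix.adjugate_fin_two, Matrix.transpose_apply, Matrix.one_apply, Matrix.det_fin_two,
        Matrix.vecHead, Matrix.vecTail, Matrix.transpose, Matrix.vecMul, dotProduct]
      field_simp
      all_goals ring

lemma jacobianMatrix_apply (φ : E2 → E2) (x : E2) (i j : Fin 2) :
    jacobianMatrix φ x i j = fderiv ℝ φ x (EuclideanSpace.single j 1) i := by
  simp [jacobianMatrix, _root_.stdBasis, LinearMap.toMatrix_apply,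
    EuclideanSpace.basisFun_apply, OrthonormalBasis.coe_toBasis_repr_apply,
    EuclideanSpace.basisFun_repr, OrthonormalBasis.coe_toBasis]

/-- The derivative of the `(i,j)` entry of the Jacobian matrix. -/
def entryDeriv (φ : E2 → E2) (x : E2) (i j : Fin 2) : E2 →L[ℝ] ℝ :=
  ((EuclideanSpace.proj i).comp
    (ContinuousLinearMap.apply ℝ E2 (EuclideanSpace.single j 1))).comp
      (fderiv ℝ (fderiv ℝ φ) x)

lemma hasFDerivAt_entry {φ : E2 → E2} (hφ : ContDiff ℝ 2 φ) (x : E2) (i j : Fin 2) :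
    HasFDerivAt (fun y => jacobianMatrix φ y i j) (entryDeriv φ x i j) x := by
  have hdiff : DifferentiableAt ℝ (fderiv ℝ φ) x :=
    ((hφ.fderiv_right (m := 1) (by norm_num)).differentiable one_ne_zero) x
  have h1 : HasFDerivAt (fderiv ℝ φ) (fderiv ℝ (fderiv ℝ φ) x) x := hdiff.hasFDerivAt
  have h2 := (((EuclideanSpace.proj i (𝕜 := ℝ)).comp
    (ContinuousLinearMap.apply ℝ E2 (EuclideanSpace.single j 1))).hasFDerivAt).comp x h1
  have heq : (fun y => jacobianMatrix φ y i j) =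
      (fun y => ((EuclideanSpace.proj i (𝕜 := ℝ)).comp
        (ContinuousLinearMap.apply ℝ E2 (EuclideanSpace.single j 1))) (fderiv ℝ φ y)) := by
    funext y; rw [jacobianMatrix_apply]; rfl
  rw [entryDeriv, heq]
  exact h2

lemma coord_abs_le_norm (x : E2) (i : Fin 2) : |x i| ≤ ‖x‖ := by
  rw [EuclideanSpace.norm_eq]
  have h : |x i| = Real.sqrt (‖x i‖^2) := by rw [Real.sqrt_sq_eq_abs]; simp
  rw [h]
  exact Real.sqrt_le_sqrt <| Finset.single_le_sum (f := fun j => ‖x j‖^2)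
    (fun j _ => by positivity) (Finset.mem_univ i)

lemma entryDeriv_abs_le {φ : E2 → E2} (x : E2) (i j : Fin 2) (v : E2) (hv : ‖v‖ ≤ 1) :
    |entryDeriv φ x i j v| ≤ ‖iteratedFDeriv ℝ 2 φ x‖ := by
  have he : entryDeriv φ x i j v = iteratedFDeriv ℝ 2 φ x ![v, EuclideanSpace.single j 1] i := by
    rw [iteratedFDeriv_two_apply]
    rfl
  rw [he]
  calc |iteratedFDeriv ℝ 2 φ x ![v, EuclideanSpace.single j 1] i|
      ≤ ‖iteratedFDeriv ℝ 2 φ x ![v, EuclideanSpace.single j 1]‖ := coord_abs_le_norm _ i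
    _ ≤ ‖iteratedFDeriv ℝ 2 φ x‖ * ∏ k, ‖![v, EuclideanSpace.single j 1] k‖ :=
        ContinuousMultilinearMap.le_opNorm _ _
    _ ≤ ‖iteratedFDeriv ℝ 2 φ x‖ := by
        rw [Fin.prod_univ_two]
        simp only [Matrix.cons_val_zero, Matrix.cons_val_one, Matrix.head_cons,
          EuclideanSpace.norm_single, norm_one, mul_one]
        nlinarith [norm_nonneg (iteratedFDeriv ℝ 2 φ x), norm_nonneg v]

lemma entry_dev (φ : E2 → E2) (x : E2) (i j : Fin 2) :
    |jacobianMatrix φ x i j - (if i = j then (1:ℝ) else 0)| ≤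
      ‖fderiv ℝ φ x - ContinuousLinearMap.id ℝ E2‖ := by
  rw [jacobianMatrix_apply]
  have h1 : fderiv ℝ φ x (EuclideanSpace.single j 1) i - (if i = j then (1:ℝ) else 0)
      = ((fderiv ℝ φ x - ContinuousLinearMap.id ℝ E2) (EuclideanSpace.single j 1)) i := by
    simp [EuclideanSpace.single_apply, eq_comm]
  rw [h1]
  calc |((fderiv ℝ φ x - ContinuousLinearMap.id ℝ E2) (EuclideanSpace.single j 1)) i|
      ≤ ‖(fderiv ℝ φ x - ContinuousLinearMap.id ℝ E2) (EuclideanSpace.single j 1)‖ :=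
        coord_abs_le_norm _ i
    _ ≤ ‖fderiv ℝ φ x - ContinuousLinearMap.id ℝ E2‖ * ‖EuclideanSpace.single j (1:ℝ)‖ :=
        ContinuousLinearMap.le_opNorm _ _
    _ = ‖fderiv ℝ φ x - ContinuousLinearMap.id ℝ E2‖ := by
        rw [EuclideanSpace.norm_single, norm_one, mul_one]

lemma mul_abs_le {s u S N : ℝ} (hs : |s| ≤ S) (hu : |u| ≤ N) : |s * u| ≤ S * N := by
  rw [abs_mul]; exact mul_le_mul hs hu (abs_nonneg _) ((abs_nonneg s).trans hs)

lemma dv_bound {ax bx cx dx α β γ δ η : ℝ}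
    (ha : |ax| ≤ 5/4) (hb : |bx| ≤ 1/4) (hc : |cx| ≤ 1/4) (hd : |dx| ≤ 5/4)
    (hα : |α| ≤ η) (hβ : |β| ≤ η) (hγ : |γ| ≤ η) (hδ : |δ| ≤ η) :
    |ax * δ + dx * α - (bx * γ + cx * β)| ≤ 3 * η := by
  have e1 := mul_abs_le ha hδ
  have e2 := mul_abs_le hd hα
  have e3 := mul_abs_le hb hγ
  have e4 := mul_abs_le hc hβ
  have t1 : |ax * δ + dx * α - (bx * γ + cx * β)| ≤ |ax * δ| + |dx * α| + |bx * γ| + |cx * β| := by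
    have := abs_add_le (ax * δ) (dx * α)
    have := abs_add_le (bx * γ) (cx * β)
    have := abs_sub (ax * δ + dx * α) (bx * γ + cx * β)
    linarith
  linarith

lemma scalar_bound {nx Δx dv nv η : ℝ} (hn : |nx| ≤ 2) (hΔl : 1/2 ≤ Δx) (hΔu : Δx ≤ 2)
    (hdv : |dv| ≤ 3 * η) (hnv : |nv| ≤ 3 * η) (hη : 0 ≤ η) :
    |nx * (dv * -(Δx ^ 2)⁻¹) + Δx⁻¹ * nv| ≤ 40 * η := by
  have hΔ0 : (0:ℝ) < Δx := by linarith
  have h2 : (Δx ^ 2)⁻¹ ≤ 4 := by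
    rw [show (4:ℝ) = ((1:ℝ)/4)⁻¹ by norm_num]
    exact inv_anti₀ (by norm_num) (by nlinarith)
  have h3 : Δx⁻¹ ≤ 2 := by
    rw [show (2:ℝ) = ((1:ℝ)/2)⁻¹ by norm_num]
    exact inv_anti₀ (by norm_num) hΔl
  have h4 : (0:ℝ) ≤ (Δx ^ 2)⁻¹ := by positivity
  have h5 : (0:ℝ) ≤ Δx⁻¹ := by positivity
  have k1 : |nx * (dv * -(Δx ^ 2)⁻¹)| ≤ 2 * (3 * η * 4) := by
    rw [abs_mul, abs_mul, abs_neg, abs_of_nonneg h4]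
    have : |dv| * (Δx ^ 2)⁻¹ ≤ 3 * η * 4 :=
      mul_le_mul hdv h2 h4 (by linarith [abs_nonneg dv])
    exact mul_le_mul hn this (by positivity) (by norm_num)
  have k2 : |Δx⁻¹ * nv| ≤ 2 * (3 * η) := by
    rw [abs_mul, abs_of_nonneg h5]
    exact mul_le_mul h3 hnv (abs_nonneg _) (by norm_num)
  calc |nx * (dv * -(Δx ^ 2)⁻¹) + Δx⁻¹ * nv| ≤ _ + _ := abs_add_le _ _
    _ ≤ 40 * η := by linarith

/-- The master lemma for a single map. -/
lemma master {ψ : E2 → E2} (hψ : ContDiff ℝ 2 ψ) {Ω : Set E2} (hΩ : IsOpen Ω) {η : ℝ}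
    (h1 : ∀ x ∈ Ω, ‖fderiv ℝ ψ x - ContinuousLinearMap.id ℝ E2‖ ≤ 1/4)
    (h2 : ∀ x ∈ Ω, ‖iteratedFDeriv ℝ 2 ψ x‖ ≤ η) :
    (∀ x ∈ Ω, IsUnit (jacobianMatrix ψ x)) ∧
    (∀ i j : Fin 2, ∀ x ∈ Ω, ∃ L : E2 →L[ℝ] ℝ,
      HasFDerivAt (fun y => Mmat ψ y i j) L x ∧
      ∀ v : E2, ‖v‖ ≤ 1 → |L v| ≤ 40 * η) := by
  -- entry bounds
  have ha : ∀ y ∈ Ω, |jacobianMatrix ψ y 0 0 - 1| ≤ 1/4 := fun y hy => by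
    have := (entry_dev ψ y 0 0).trans (h1 y hy); simpa using this
  have hb : ∀ y ∈ Ω, |jacobianMatrix ψ y 0 1| ≤ 1/4 := fun y hy => by
    have := (entry_dev ψ y 0 1).trans (h1 y hy); simpa using this
  have hc : ∀ y ∈ Ω, |jacobianMatrix ψ y 1 0| ≤ 1/4 := fun y hy => by
    have := (entry_dev ψ y 1 0).trans (h1 y hy); simpa using this
  have hd : ∀ y ∈ Ω, |jacobianMatrix ψ y 1 1 - 1| ≤ 1/4 := fun y hy => by
    have := (entry_dev ψ y 1 1).trans (h1 y hy); simpa using this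
  have habs : ∀ y ∈ Ω, |jacobianMatrix ψ y 0 0| ≤ 5/4 ∧ |jacobianMatrix ψ y 0 1| ≤ 1/4 ∧
      |jacobianMatrix ψ y 1 0| ≤ 1/4 ∧ |jacobianMatrix ψ y 1 1| ≤ 5/4 := fun y hy => by
    have h1 := ha y hy; have h2 := hb y hy; have h3 := hc y hy; have h4 := hd y hy
    rw [abs_le] at h1 h2 h3 h4
    exact ⟨abs_le.mpr ⟨by linarith [h1.1], by linarith [h1.2]⟩, abs_le.mpr h2, abs_le.mpr h3,
      abs_le.mpr ⟨by linarith [h4.1], by linarith [h4.2]⟩⟩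
  have hdet : ∀ y ∈ Ω, 1/2 ≤ (jacobianMatrix ψ y).det ∧ (jacobianMatrix ψ y).det ≤ 2 := by
    intro y hy
    rw [Matrix.det_fin_two]
    have h1 := ha y hy; have h2 := hb y hy; have h3 := hc y hy; have h4 := hd y hy
    rw [abs_le] at h1 h2 h3 h4
    constructor <;> nlinarith [h1.1, h1.2, h2.1, h2.2, h3.1, h3.2, h4.1, h4.2]
  have hdetpos : ∀ y ∈ Ω, 0 < (jacobianMatrix ψ y).det := fun y hy => by
    linarith [(hdet y hy).1]
  constructor
  · intro x hx
    rw [Matrix.isUnit_iff_isUnit_det, isUnit_iff_ne_zero]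
    exact ne_of_gt (hdetpos x hx)
  intro i j x hx
  -- derivative data for the four entries
  have hη : (0:ℝ) ≤ η := le_trans (norm_nonneg _) (h2 x hx)
  have ha' := hasFDerivAt_entry hψ x 0 0
  have hb' := hasFDerivAt_entry hψ x 0 1
  have hc' := hasFDerivAt_entry hψ x 1 0
  have hd' := hasFDerivAt_entry hψ x 1 1
  have hΔ' : HasFDerivAt (fun y => (jacobianMatrix ψ y).det)
      ((jacobianMatrix ψ x 0 0 • entryDeriv ψ x 1 1 + jacobianMatrix ψ x 1 1 • entryDeriv ψ x 0 0)
        - (jacobianMatrix ψ x 0 1 • entryDeriv ψ x 1 0 +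
           jacobianMatrix ψ x 1 0 • entryDeriv ψ x 0 1)) x := by
    simp only [Matrix.det_fin_two]
    exact (ha'.mul hd').sub (hb'.mul hc')
  have hne : (jacobianMatrix ψ x).det ≠ 0 := ne_of_gt (hdetpos x hx)
  have hinv := (hasFDerivAt_inv hne).comp x hΔ'
  -- derivative application bounds
  have hαle : ∀ i' j' : Fin 2, ∀ v : E2, ‖v‖ ≤ 1 → |entryDeriv ψ x i' j' v| ≤ η :=
    fun i' j' v hv => (entryDeriv_abs_le x i' j' v hv).trans (h2 x hx)
  obtain ⟨haA, hbA, hcA, hdA⟩ := habs x hx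
  have hΔ'v : ∀ v : E2, ‖v‖ ≤ 1 →
      |((jacobianMatrix ψ x 0 0 • entryDeriv ψ x 1 1 + jacobianMatrix ψ x 1 1 • entryDeriv ψ x 0 0)
        - (jacobianMatrix ψ x 0 1 • entryDeriv ψ x 1 0 +
           jacobianMatrix ψ x 1 0 • entryDeriv ψ x 0 1)) v| ≤ 3 * η := by
    intro v hv
    simp only [ContinuousLinearMap.sub_apply, ContinuousLinearMap.add_apply,
      ContinuousLinearMap.smul_apply, smul_eq_mul]
    exact dv_bound haA hbA hcA hdA (hαle 0 0 v hv) (hαle 0 1 v hv) (hαle 1 0 v hv)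
      (hαle 1 1 v hv)
  fin_cases i <;> fin_cases j
  -- entry (0,0)
  · have hnum : HasFDerivAt
        (fun y => jacobianMatrix ψ y 0 1 * jacobianMatrix ψ y 0 1 +
          jacobianMatrix ψ y 1 1 * jacobianMatrix ψ y 1 1)
        ((jacobianMatrix ψ x 0 1 • entryDeriv ψ x 0 1 + jacobianMatrix ψ x 0 1 • entryDeriv ψ x 0 1)
          + (jacobianMatrix ψ x 1 1 • entryDeriv ψ x 1 1 +
             jacobianMatrix ψ x 1 1 • entryDeriv ψ x 1 1)) x :=
      (hb'.mul hb').add (hd'.mul hd')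
    have hF := (hnum.mul hinv).sub_const 1
    refine ⟨_, hF.congr_of_eventuallyEq ?_, ?_⟩
    · filter_upwards [hΩ.mem_nhds hx] with y hy
      have h := Mentry (jacobianMatrix ψ y) (hdetpos y hy) 0 0
      show Mmat ψ y 0 0 = _
      rw [Mmat]
      simpa [Function.comp] using h
    intro v hv
    simp only [ContinuousLinearMap.add_apply, ContinuousLinearMap.smul_apply,
      ContinuousLinearMap.comp_apply, ContinuousLinearMap.smulRight_apply,
      ContinuousLinearMap.one_apply, smul_eq_mul]
    have hnx : |jacobianMatrix ψ x 0 1 * jacobianMatrix ψ x 0 1 +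
        jacobianMatrix ψ x 1 1 * jacobianMatrix ψ x 1 1| ≤ 2 := by
      have := mul_abs_le hbA hbA; have := mul_abs_le hdA hdA
      have t := abs_add_le (jacobianMatrix ψ x 0 1 * jacobianMatrix ψ x 0 1)
        (jacobianMatrix ψ x 1 1 * jacobianMatrix ψ x 1 1)
      linarith
    have hnv : |jacobianMatrix ψ x 0 1 * entryDeriv ψ x 0 1 v +
        jacobianMatrix ψ x 0 1 * entryDeriv ψ x 0 1 v +
        (jacobianMatrix ψ x 1 1 * entryDeriv ψ x 1 1 v +
         jacobianMatrix ψ x 1 1 * entryDeriv ψ x 1 1 v)| ≤ 3 * η := by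
      have e1 := mul_abs_le hbA (hαle 0 1 v hv)
      have e2 := mul_abs_le hdA (hαle 1 1 v hv)
      have t1 := abs_add_le (jacobianMatrix ψ x 0 1 * entryDeriv ψ x 0 1 v)
        (jacobianMatrix ψ x 0 1 * entryDeriv ψ x 0 1 v)
      have t2 := abs_add_le (jacobianMatrix ψ x 1 1 * entryDeriv ψ x 1 1 v)
        (jacobianMatrix ψ x 1 1 * entryDeriv ψ x 1 1 v)
      have t3 := abs_add_le (jacobianMatrix ψ x 0 1 * entryDeriv ψ x 0 1 v +
        jacobianMatrix ψ x 0 1 * entryDeriv ψ x 0 1 v)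
        (jacobianMatrix ψ x 1 1 * entryDeriv ψ x 1 1 v +
         jacobianMatrix ψ x 1 1 * entryDeriv ψ x 1 1 v)
      linarith
    exact scalar_bound hnx (hdet x hx).1 (hdet x hx).2 (hΔ'v v hv) hnv hη
  · have hnum : HasFDerivAt
        (fun y => -(jacobianMatrix ψ y 0 0 * jacobianMatrix ψ y 0 1 +
          jacobianMatrix ψ y 1 0 * jacobianMatrix ψ y 1 1))
        (-((jacobianMatrix ψ x 0 0 • entryDeriv ψ x 0 1 + jacobianMatrix ψ x 0 1 • entryDeriv ψ x 0 0)
          + (jacobianMatrix ψ x 1 0 • entryDeriv ψ x 1 1 +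
             jacobianMatrix ψ x 1 1 • entryDeriv ψ x 1 0))) x :=
      ((ha'.mul hb').add (hc'.mul hd')).neg
    have hF := hnum.mul hinv
    refine ⟨_, hF.congr_of_eventuallyEq ?_, ?_⟩
    · filter_upwards [hΩ.mem_nhds hx] with y hy
      have h := Mentry (jacobianMatrix ψ y) (hdetpos y hy) 0 1
      show Mmat ψ y 0 1 = _
      rw [Mmat]
      simpa [Function.comp] using h
    intro v hv
    simp only [ContinuousLinearMap.add_apply, ContinuousLinearMap.smul_apply,
      ContinuousLinearMap.comp_apply, ContinuousLinearMap.smulRight_apply,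
      ContinuousLinearMap.one_apply, ContinuousLinearMap.neg_apply, smul_eq_mul]
    have hnx : |-(jacobianMatrix ψ x 0 0 * jacobianMatrix ψ x 0 1 +
        jacobianMatrix ψ x 1 0 * jacobianMatrix ψ x 1 1)| ≤ 2 := by
      rw [abs_neg]
      have := mul_abs_le haA hbA; have := mul_abs_le hcA hdA
      have t := abs_add_le (jacobianMatrix ψ x 0 0 * jacobianMatrix ψ x 0 1)
        (jacobianMatrix ψ x 1 0 * jacobianMatrix ψ x 1 1)
      linarith
    have hnv : |-(jacobianMatrix ψ x 0 0 * entryDeriv ψ x 0 1 v +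
        jacobianMatrix ψ x 0 1 * entryDeriv ψ x 0 0 v +
        (jacobianMatrix ψ x 1 0 * entryDeriv ψ x 1 1 v +
         jacobianMatrix ψ x 1 1 * entryDeriv ψ x 1 0 v))| ≤ 3 * η := by
      rw [abs_neg]
      have e1 := mul_abs_le haA (hαle 0 1 v hv)
      have e2 := mul_abs_le hbA (hαle 0 0 v hv)
      have e3 := mul_abs_le hcA (hαle 1 1 v hv)
      have e4 := mul_abs_le hdA (hαle 1 0 v hv)
      have t1 := abs_add_le (jacobianMatrix ψ x 0 0 * entryDeriv ψ x 0 1 v)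
        (jacobianMatrix ψ x 0 1 * entryDeriv ψ x 0 0 v)
      have t2 := abs_add_le (jacobianMatrix ψ x 1 0 * entryDeriv ψ x 1 1 v)
        (jacobianMatrix ψ x 1 1 * entryDeriv ψ x 1 0 v)
      have t3 := abs_add_le (jacobianMatrix ψ x 0 0 * entryDeriv ψ x 0 1 v +
        jacobianMatrix ψ x 0 1 * entryDeriv ψ x 0 0 v)
        (jacobianMatrix ψ x 1 0 * entryDeriv ψ x 1 1 v +
         jacobianMatrix ψ x 1 1 * entryDeriv ψ x 1 0 v)
      linarith
    exact scalar_bound hnx (hdet x hx).1 (hdet x hx).2 (hΔ'v v hv) hnv hη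
  · have hnum : HasFDerivAt
        (fun y => -(jacobianMatrix ψ y 0 0 * jacobianMatrix ψ y 0 1 +
          jacobianMatrix ψ y 1 0 * jacobianMatrix ψ y 1 1))
        (-((jacobianMatrix ψ x 0 0 • entryDeriv ψ x 0 1 + jacobianMatrix ψ x 0 1 • entryDeriv ψ x 0 0)
          + (jacobianMatrix ψ x 1 0 • entryDeriv ψ x 1 1 +
             jacobianMatrix ψ x 1 1 • entryDeriv ψ x 1 0))) x :=
      ((ha'.mul hb').add (hc'.mul hd')).neg
    have hF := hnum.mul hinv
    refine ⟨_, hF.congr_of_eventuallyEq ?_, ?_⟩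
    · filter_upwards [hΩ.mem_nhds hx] with y hy
      have h := Mentry (jacobianMatrix ψ y) (hdetpos y hy) 1 0
      show Mmat ψ y 1 0 = _
      rw [Mmat]
      simpa [Function.comp] using h
    intro v hv
    simp only [ContinuousLinearMap.add_apply, ContinuousLinearMap.smul_apply,
      ContinuousLinearMap.comp_apply, ContinuousLinearMap.smulRight_apply,
      ContinuousLinearMap.one_apply, ContinuousLinearMap.neg_apply, smul_eq_mul]
    have hnx : |-(jacobianMatrix ψ x 0 0 * jacobianMatrix ψ x 0 1 +
        jacobianMatrix ψ x 1 0 * jacobianMatrix ψ x 1 1)| ≤ 2 := by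
      rw [abs_neg]
      have := mul_abs_le haA hbA; have := mul_abs_le hcA hdA
      have t := abs_add_le (jacobianMatrix ψ x 0 0 * jacobianMatrix ψ x 0 1)
        (jacobianMatrix ψ x 1 0 * jacobianMatrix ψ x 1 1)
      linarith
    have hnv : |-(jacobianMatrix ψ x 0 0 * entryDeriv ψ x 0 1 v +
        jacobianMatrix ψ x 0 1 * entryDeriv ψ x 0 0 v +
        (jacobianMatrix ψ x 1 0 * entryDeriv ψ x 1 1 v +
         jacobianMatrix ψ x 1 1 * entryDeriv ψ x 1 0 v))| ≤ 3 * η := by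
      rw [abs_neg]
      have e1 := mul_abs_le haA (hαle 0 1 v hv)
      have e2 := mul_abs_le hbA (hαle 0 0 v hv)
      have e3 := mul_abs_le hcA (hαle 1 1 v hv)
      have e4 := mul_abs_le hdA (hαle 1 0 v hv)
      have t1 := abs_add_le (jacobianMatrix ψ x 0 0 * entryDeriv ψ x 0 1 v)
        (jacobianMatrix ψ x 0 1 * entryDeriv ψ x 0 0 v)
      have t2 := abs_add_le (jacobianMatrix ψ x 1 0 * entryDeriv ψ x 1 1 v)
        (jacobianMatrix ψ x 1 1 * entryDeriv ψ x 1 0 v)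
      have t3 := abs_add_le (jacobianMatrix ψ x 0 0 * entryDeriv ψ x 0 1 v +
        jacobianMatrix ψ x 0 1 * entryDeriv ψ x 0 0 v)
        (jacobianMatrix ψ x 1 0 * entryDeriv ψ x 1 1 v +
         jacobianMatrix ψ x 1 1 * entryDeriv ψ x 1 0 v)
      linarith
    exact scalar_bound hnx (hdet x hx).1 (hdet x hx).2 (hΔ'v v hv) hnv hη
  · have hnum : HasFDerivAt
        (fun y => jacobianMatrix ψ y 0 0 * jacobianMatrix ψ y 0 0 +
          jacobianMatrix ψ y 1 0 * jacobianMatrix ψ y 1 0)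
        ((jacobianMatrix ψ x 0 0 • entryDeriv ψ x 0 0 + jacobianMatrix ψ x 0 0 • entryDeriv ψ x 0 0)
          + (jacobianMatrix ψ x 1 0 • entryDeriv ψ x 1 0 +
             jacobianMatrix ψ x 1 0 • entryDeriv ψ x 1 0)) x :=
      (ha'.mul ha').add (hc'.mul hc')
    have hF := (hnum.mul hinv).sub_const 1
    refine ⟨_, hF.congr_of_eventuallyEq ?_, ?_⟩
    · filter_upwards [hΩ.mem_nhds hx] with y hy
      have h := Mentry (jacobianMatrix ψ y) (hdetpos y hy) 1 1
      show Mmat ψ y 1 1 = _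
      rw [Mmat]
      simpa [Function.comp] using h
    intro v hv
    simp only [ContinuousLinearMap.add_apply, ContinuousLinearMap.smul_apply,
      ContinuousLinearMap.comp_apply, ContinuousLinearMap.smulRight_apply,
      ContinuousLinearMap.one_apply, smul_eq_mul]
    have hnx : |jacobianMatrix ψ x 0 0 * jacobianMatrix ψ x 0 0 +
        jacobianMatrix ψ x 1 0 * jacobianMatrix ψ x 1 0| ≤ 2 := by
      have := mul_abs_le haA haA; have := mul_abs_le hcA hcA
      have t := abs_add_le (jacobianMatrix ψ x 0 0 * jacobianMatrix ψ x 0 0)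
        (jacobianMatrix ψ x 1 0 * jacobianMatrix ψ x 1 0)
      linarith
    have hnv : |jacobianMatrix ψ x 0 0 * entryDeriv ψ x 0 0 v +
        jacobianMatrix ψ x 0 0 * entryDeriv ψ x 0 0 v +
        (jacobianMatrix ψ x 1 0 * entryDeriv ψ x 1 0 v +
         jacobianMatrix ψ x 1 0 * entryDeriv ψ x 1 0 v)| ≤ 3 * η := by
      have e1 := mul_abs_le haA (hαle 0 0 v hv)
      have e2 := mul_abs_le hcA (hαle 1 0 v hv)
      have t1 := abs_add_le (jacobianMatrix ψ x 0 0 * entryDeriv ψ x 0 0 v)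
        (jacobianMatrix ψ x 0 0 * entryDeriv ψ x 0 0 v)
      have t2 := abs_add_le (jacobianMatrix ψ x 1 0 * entryDeriv ψ x 1 0 v)
        (jacobianMatrix ψ x 1 0 * entryDeriv ψ x 1 0 v)
      have t3 := abs_add_le (jacobianMatrix ψ x 0 0 * entryDeriv ψ x 0 0 v +
        jacobianMatrix ψ x 0 0 * entryDeriv ψ x 0 0 v)
        (jacobianMatrix ψ x 1 0 * entryDeriv ψ x 1 0 v +
         jacobianMatrix ψ x 1 0 * entryDeriv ψ x 1 0 v)
      linarith
    exact scalar_bound hnx (hdet x hx).1 (hdet x hx).2 (hΔ'v v hv) hnv hη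

/-- Lemma 4.5(ii) of the paper: if `Dφ_k → I` and `D²φ_k → 0` uniformly on `Ω`, then
eventually `Dφ_k(x)` is invertible, the entries `a_k, b_k, c_k, d_k` of
`M_k = Dφ_k⁻¹ (Dφ_k⁻¹)ᵀ |det Dφ_k| − I` are differentiable on `Ω`, and the divergences
`∂₁ a_k + ∂₂ b_k` and `∂₁ c_k + ∂₂ d_k` tend to `0` uniformly on `Ω`. -/
theorem divergence_of_M_tendsto_zero
    (Ω : Set (EuclideanSpace ℝ (Fin 2))) (hΩ : IsOpen Ω)
    (φ : ℕ → EuclideanSpace ℝ (Fin 2) → EuclideanSpace ℝ (Fin 2))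
    (hsmooth : ∀ k, ContDiff ℝ 2 (φ k))
    (hconv1 : ∀ ε > 0, ∃ K : ℕ, ∀ k ≥ K, ∀ x ∈ Ω,
      ‖fderiv ℝ (φ k) x - ContinuousLinearMap.id ℝ (EuclideanSpace ℝ (Fin 2))‖ ≤ ε)
    (hconv2 : ∀ ε > 0, ∃ K : ℕ, ∀ k ≥ K, ∀ x ∈ Ω,
      ‖iteratedFDeriv ℝ 2 (φ k) x‖ ≤ ε) :
    ∀ ε > 0, ∃ K : ℕ, ∀ k ≥ K,
      (∀ x ∈ Ω, IsUnit (jacobianMatrix (φ k) x)) ∧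
      (∀ i j : Fin 2, ∀ x ∈ Ω,
        DifferentiableAt ℝ (fun y => Mmat (φ k) y i j) x) ∧
      (∀ x ∈ Ω,
        |fderiv ℝ (fun y => Mmat (φ k) y 0 0) x (EuclideanSpace.single 0 1) +
         fderiv ℝ (fun y => Mmat (φ k) y 0 1) x (EuclideanSpace.single 1 1)| ≤ ε) ∧
      (∀ x ∈ Ω,
        |fderiv ℝ (fun y => Mmat (φ k) y 1 0) x (EuclideanSpace.single 0 1) +
         fderiv ℝ (fun y => Mmat (φ k) y 1 1) x (EuclideanSpace.single 1 1)| ≤ ε) := by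
  intro ε hε
  obtain ⟨K₁, hK₁⟩ := hconv1 (1/4) (by norm_num)
  obtain ⟨K₂, hK₂⟩ := hconv2 (ε/100) (by positivity)
  refine ⟨max K₁ K₂, fun k hk => ?_⟩
  have h1 : ∀ x ∈ Ω, ‖fderiv ℝ (φ k) x - ContinuousLinearMap.id ℝ E2‖ ≤ 1/4 :=
    fun x hx => hK₁ k (le_trans (le_max_left _ _) hk) x hx
  have h2 : ∀ x ∈ Ω, ‖iteratedFDeriv ℝ 2 (φ k) x‖ ≤ ε/100 :=
    fun x hx => hK₂ k (le_trans (le_max_right _ _) hk) x hx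
  obtain ⟨hunit, hkey⟩ := master (hsmooth k) hΩ h1 h2
  have n0 : ‖EuclideanSpace.single (0 : Fin 2) (1:ℝ)‖ ≤ 1 := by
    rw [EuclideanSpace.norm_single, norm_one]
  have n1 : ‖EuclideanSpace.single (1 : Fin 2) (1:ℝ)‖ ≤ 1 := by
    rw [EuclideanSpace.norm_single, norm_one]
  refine ⟨hunit, ?_, ?_, ?_⟩
  · intro i j x hx
    obtain ⟨L, hL, _⟩ := hkey i j x hx
    exact hL.differentiableAt
  · intro x hx
    obtain ⟨L₁, hL₁, hB₁⟩ := hkey 0 0 x hx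
    obtain ⟨L₂, hL₂, hB₂⟩ := hkey 0 1 x hx
    rw [hL₁.fderiv, hL₂.fderiv]
    have b1 := hB₁ _ n0
    have b2 := hB₂ _ n1
    have t := abs_add_le (L₁ (EuclideanSpace.single 0 1)) (L₂ (EuclideanSpace.single 1 1))
    linarith
  · intro x hx
    obtain ⟨L₁, hL₁, hB₁⟩ := hkey 1 0 x hx
    obtain ⟨L₂, hL₂, hB₂⟩ := hkey 1 1 x hx
    rw [hL₁.fderiv, hL₂.fderiv]
    have b1 := hB₁ _ n0
    have b2 := hB₂ _ n1
    have t := abs_add_le (L₁ (EuclideanSpace.single 0 1)) (L₂ (EuclideanSpace.single 1 1))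
    linarith

end
end

section
/- Assume m > 0 and M < ∞, and that φ is a bijection from Ω onto Ω̃. Let 1 < p < ∞, let q satisfy 1/p + 1/q = 1, let F be a finite index set, and for j ∈ F let ũ_j : ℝ² → ℝ belong to L^p(Ω̃) ∩ L^q(Ω̃). Suppose P is a bounded linear operator on L^p(Ω) with operator norm at most A, and suppose B ≥ 0 is such that for every f ∈ L^p(Ω), ‖ P f − Σ_{j∈F} (∫_Ω ũ_j(φ(x)) f(x) |det Dφ(x)| dx) · (ũ_j ∘ φ) ‖_{L^p(Ω)} ≤ B ‖f‖_{L^p(Ω)}. Then for every g ∈ L^p(Ω̃), ‖ Σ_{j∈F} (∫_{Ω̃} ũ_j(y) g(y) dy) · ũ_j ‖_{L^p(Ω̃)} ≤ (M/m)^{1/p} (A + B) ‖g‖_{L^p(Ω̃)}. -/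
open MeasureTheory ENNReal NNReal

set_option maxHeartbeats 1000000 in
/-- Transference lemma (Lemma 5.3): bounds for the projection `P` on `L^p(Ω)` and for
`P − P_F^φ` transfer to the eigenfunction expansion operator on the perturbed
domain `Ω̃ = φ(Ω)`. -/
theorem transference_of_projection_bounds
    (Ω : Set (EuclideanSpace ℝ (Fin 2))) (hΩ : MeasurableSet Ω)
    (φ : EuclideanSpace ℝ (Fin 2) → EuclideanSpace ℝ (Fin 2))
    (Dφ : EuclideanSpace ℝ (Fin 2) →
      EuclideanSpace ℝ (Fin 2) →L[ℝ] EuclideanSpace ℝ (Fin 2))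
    (hdiff : ∀ x ∈ Ω, HasFDerivAt φ (Dφ x) x)
    (hbij : Set.InjOn φ Ω)
    (m M : ℝ) (hm : 0 < m)
    (hm' : ∀ x ∈ Ω, m ≤ |(Dφ x).det|)
    (hM' : ∀ x ∈ Ω, |(Dφ x).det| ≤ M)
    (p q : ℝ) (hp : 1 < p) (hpq : 1 / p + 1 / q = 1)
    [Fact (1 ≤ ENNReal.ofReal p)]
    {ι : Type*} (F : Finset ι)
    (u : ι → EuclideanSpace ℝ (Fin 2) → ℝ)
    (hup : ∀ j ∈ F, MemLp (u j) (ENNReal.ofReal p) (volume.restrict (φ '' Ω)))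
    (huq : ∀ j ∈ F, MemLp (u j) (ENNReal.ofReal q) (volume.restrict (φ '' Ω)))
    (P : Lp ℝ (ENNReal.ofReal p) (volume.restrict Ω) →L[ℝ]
      Lp ℝ (ENNReal.ofReal p) (volume.restrict Ω))
    (A : ℝ) (hA : ‖P‖ ≤ A)
    (B : ℝ) (hB : 0 ≤ B)
    (hPB : ∀ f : Lp ℝ (ENNReal.ofReal p) (volume.restrict Ω),
      eLpNorm
          (fun x => P f x -
            ∑ j ∈ F, (∫ x in Ω, u j (φ x) * f x * |(Dφ x).det|) * u j (φ x))
          (ENNReal.ofReal p) (volume.restrict Ω) ≤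
        ENNReal.ofReal B * eLpNorm (⇑f) (ENNReal.ofReal p) (volume.restrict Ω)) :
    ∀ g : EuclideanSpace ℝ (Fin 2) → ℝ,
      MemLp g (ENNReal.ofReal p) (volume.restrict (φ '' Ω)) →
      eLpNorm
          (fun y => ∑ j ∈ F, (∫ y in φ '' Ω, u j y * g y) * u j y)
          (ENNReal.ofReal p) (volume.restrict (φ '' Ω)) ≤
        ENNReal.ofReal ((M / m) ^ (1 / p) * (A + B)) *
          eLpNorm g (ENNReal.ofReal p) (volume.restrict (φ '' Ω)) := by
  intro g hg
  classical
  by_cases hne : Ω.Nonempty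
  swap
  · rw [Set.not_nonempty_iff_eq_empty] at hne
    simp [hne]
  obtain ⟨x₀, hx₀⟩ := hne
  have hmM : m ≤ M := le_trans (hm' x₀ hx₀) (hM' x₀ hx₀)
  have hM0 : 0 < M := lt_of_lt_of_le hm hmM
  have hp0 : 0 < p := lt_trans one_pos hp
  have hpE0 : ENNReal.ofReal p ≠ 0 := by
    simp only [ne_eq, ENNReal.ofReal_eq_zero, not_le]; exact hp0
  have hpEtop : (ENNReal.ofReal p) ≠ ∞ := ENNReal.ofReal_ne_top
  have hpEr : (ENNReal.ofReal p).toReal = p := ENNReal.toReal_ofReal hp0.le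
  have hp1E : (1 : ℝ≥0∞) ≤ ENNReal.ofReal p := Fact.out
  have hφd : ∀ x ∈ Ω, HasFDerivWithinAt φ (Dφ x) Ω x :=
    fun x hx => (hdiff x hx).hasFDerivWithinAt
  have hmne : ENNReal.ofReal m ≠ 0 := (ENNReal.ofReal_pos.2 hm).ne'
  -- the p-th power of the eLpNorm as a lintegral
  have pow_eq : ∀ (μ' : Measure (EuclideanSpace ℝ (Fin 2)))
      (h : EuclideanSpace ℝ (Fin 2) → ℝ),
      (eLpNorm h (ENNReal.ofReal p) μ') ^ p = ∫⁻ x, (‖h x‖₊ : ℝ≥0∞) ^ p ∂μ' := by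
    intro μ' h
    rw [eLpNorm_eq_lintegral_rpow_enorm_toReal hpE0 hpEtop, hpEr, ← ENNReal.rpow_mul,
      one_div, inv_mul_cancel₀ hp0.ne', ENNReal.rpow_one]
    rfl
  have norm_eq : ∀ (μ' : Measure (EuclideanSpace ℝ (Fin 2)))
      (h : EuclideanSpace ℝ (Fin 2) → ℝ),
      eLpNorm h (ENNReal.ofReal p) μ' = (∫⁻ x, (‖h x‖₊ : ℝ≥0∞) ^ p ∂μ') ^ (1 / p) :=
    fun μ' h => by rw [eLpNorm_eq_lintegral_rpow_enorm_toReal hpE0 hpEtop, hpEr]; rfl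
  -- change of variables
  have CoVl : ∀ h : EuclideanSpace ℝ (Fin 2) → ℝ≥0∞,
      ∫⁻ y in φ '' Ω, h y = ∫⁻ x in Ω, ENNReal.ofReal |(Dφ x).det| * h (φ x) :=
    fun h => lintegral_image_eq_lintegral_abs_det_fderiv_mul volume hΩ hφd hbij h
  have CoVi : ∀ h : EuclideanSpace ℝ (Fin 2) → ℝ,
      ∫ y in φ '' Ω, h y = ∫ x in Ω, |(Dφ x).det| • h (φ x) :=
    fun h => integral_image_eq_integral_abs_det_fderiv_smul volume hΩ hφd hbij h
  obtain ⟨g', hg'm, hgg'⟩ := hg.1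
  have hφc : ContinuousOn φ Ω := fun x hx => (hdiff x hx).continuousAt.continuousWithinAt
  have hφae : AEMeasurable φ (volume.restrict Ω) := hφc.aemeasurable hΩ
  -- key lintegral bound
  have key : ∀ h : EuclideanSpace ℝ (Fin 2) → ℝ,
      ∫⁻ x in Ω, (‖h (φ x)‖₊ : ℝ≥0∞) ^ p ≤
        (ENNReal.ofReal m)⁻¹ * ∫⁻ y in φ '' Ω, (‖h y‖₊ : ℝ≥0∞) ^ p := by
    intro h
    rw [CoVl fun y => (‖h y‖₊ : ℝ≥0∞) ^ p,
      ← lintegral_const_mul' _ _ (ENNReal.inv_ne_top.2 hmne)]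
    refine lintegral_mono_ae ?_
    rw [ae_restrict_iff' hΩ]
    refine Filter.Eventually.of_forall fun x hx => ?_
    rw [← mul_assoc]
    conv_lhs => rw [← one_mul ((‖h (φ x)‖₊ : ℝ≥0∞) ^ p)]
    refine mul_le_mul_left ?_ _
    rw [← ENNReal.inv_mul_cancel hmne ENNReal.ofReal_ne_top]
    exact mul_le_mul_right (ENNReal.ofReal_le_ofReal (hm' x hx)) _
  -- finiteness of ∫ |g'|^p on the image
  have hIg' : ∫⁻ y in φ '' Ω, (‖g' y‖₊ : ℝ≥0∞) ^ p = (eLpNorm g (ENNReal.ofReal p) (volume.restrict (φ '' Ω))) ^ p := by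
    rw [pow_eq]
    exact lintegral_congr_ae (hgg'.mono fun y hy => by simp only [hy])
  have hIgfin : ∫⁻ y in φ '' Ω, (‖g' y‖₊ : ℝ≥0∞) ^ p ≠ ∞ := by
    rw [hIg']
    exact (ENNReal.rpow_lt_top_of_nonneg hp0.le hg.2.ne).ne
  -- the pulled-back function is in Lᵖ(Ω)
  have memf : MemLp (fun x => g' (φ x)) (ENNReal.ofReal p) (volume.restrict Ω) := by
    refine ⟨(hg'm.measurable.comp_aemeasurable hφae).aestronglyMeasurable, ?_⟩
    rw [norm_eq]
    refine ENNReal.rpow_lt_top_of_nonneg (by positivity) ?_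
    exact (lt_of_le_of_lt (key g')
      (ENNReal.mul_lt_top (ENNReal.inv_lt_top.2 (ENNReal.ofReal_pos.2 hm)) (lt_top_iff_ne_top.2 hIgfin))).ne
  set f : Lp ℝ (ENNReal.ofReal p) (volume.restrict Ω) := memf.toLp _ with hf
  have hf_ae : ⇑f =ᵐ[(volume.restrict Ω)] fun x => g' (φ x) := memf.coeFn_toLp
  -- coefficients agree
  have hcoef : ∀ j, (∫ x in Ω, u j (φ x) * f x * |(Dφ x).det|) = ∫ y in φ '' Ω, u j y * g y := by
    intro j
    have e1 : (∫ x in Ω, u j (φ x) * f x * |(Dφ x).det|)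
        = ∫ x in Ω, |(Dφ x).det| • (u j (φ x) * g' (φ x)) := by
      refine integral_congr_ae (hf_ae.mono fun x hx => ?_)
      simp only [smul_eq_mul] at hx ⊢
      rw [hx]; ring
    have e2 : (∫ y in φ '' Ω, u j y * g y) = ∫ y in φ '' Ω, u j y * g' y :=
      integral_congr_ae (hgg'.mono fun y hy => by simp only [hy])
    rw [e1, e2, CoVi fun y => u j y * g' y]
  -- the expansion on the image, pulled back
  set S : EuclideanSpace ℝ (Fin 2) → ℝ :=
    fun y => ∑ j ∈ F, (∫ y in φ '' Ω, u j y * g y) * u j y with hS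
  -- absolute continuity: φ pulls back null sets of the image to null sets
  have habs : (volume.restrict Ω).map φ ≪ volume.restrict (φ '' Ω) := by
    refine Measure.AbsolutelyContinuous.mk fun t ht h0 => ?_
    rw [Measure.map_apply_of_aemeasurable hφae ht, Measure.restrict_apply' hΩ]
    obtain ⟨w, wmeas, wf⟩ : ∃ w, Measurable w ∧ Set.EqOn w φ Ω := by
      refine ⟨Set.piecewise Ω φ 0, ?_, Set.piecewise_eqOn _ _ _⟩
      exact ContinuousOn.measurable_piecewise hφc continuous_zero.continuousOn hΩ
    have hTeq : φ ⁻¹' t ∩ Ω = w ⁻¹' t ∩ Ω := by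
      ext x; simp only [Set.mem_inter_iff, Set.mem_preimage]
      exact and_congr_left fun hx => by rw [wf hx]
    have hTm : MeasurableSet (w ⁻¹' t ∩ Ω) := (wmeas ht).inter hΩ
    rw [hTeq]
    by_contra hzero
    have hpos : 0 < volume (w ⁻¹' t ∩ Ω) := pos_iff_ne_zero.2 hzero
    have h1 : ENNReal.ofReal m * volume (w ⁻¹' t ∩ Ω)
        ≤ ∫⁻ x in w ⁻¹' t ∩ Ω, ENNReal.ofReal |(Dφ x).det| := by
      rw [← setLIntegral_const]
      refine lintegral_mono_ae ?_
      rw [ae_restrict_iff' hTm]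
      exact Filter.Eventually.of_forall fun x hx =>
        ENNReal.ofReal_le_ofReal (hm' x hx.2)
    have h2 : (∫⁻ x in w ⁻¹' t ∩ Ω, ENNReal.ofReal |(Dφ x).det|)
        ≤ volume (φ '' (w ⁻¹' t ∩ Ω)) :=
      lintegral_abs_det_fderiv_le_addHaar_image volume hTm
        (fun x hx => (hφd x hx.2).mono Set.inter_subset_right)
        (hbij.mono Set.inter_subset_right)
    have h3 : volume (φ '' (w ⁻¹' t ∩ Ω)) ≤ volume (t ∩ φ '' Ω) := by
      refine measure_mono ?_
      rintro y ⟨x, ⟨hxt, hxΩ⟩, rfl⟩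
      refine ⟨?_, Set.mem_image_of_mem φ hxΩ⟩
      have := Set.mem_preimage.1 hxt
      rwa [wf hxΩ] at this
    rw [Measure.restrict_apply ht] at h0
    have : ENNReal.ofReal m * volume (w ⁻¹' t ∩ Ω) = 0 :=
      le_antisymm (h1.trans (h2.trans (h3.trans_eq h0))) (by positivity)
    rcases mul_eq_zero.1 this with h | h
    · exact hmne h
    · exact hzero h
  -- a.e. strong measurability of S ∘ φ on Ω
  have hSφ : AEStronglyMeasurable (fun x => S (φ x)) (volume.restrict Ω) := by
    have h1 : ∀ j ∈ F, AEStronglyMeasurable (fun x => u j (φ x)) (volume.restrict Ω) := fun j hj =>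
      AEStronglyMeasurable.comp_aemeasurable ((hup j hj).1.mono_ac habs) hφae
    simp only [hS]
    exact Finset.aestronglyMeasurable_fun_sum F fun j hj => (h1 j hj).const_mul _
  -- main L^p(Ω) bound on the pulled-back expansion
  have hA0 : 0 ≤ A := le_trans (norm_nonneg P) hA
  have hmain : eLpNorm (fun x => S (φ x)) (ENNReal.ofReal p) (volume.restrict Ω)
      ≤ ENNReal.ofReal (A + B) * eLpNorm (fun x => g' (φ x)) (ENNReal.ofReal p) (volume.restrict Ω) := by
    have hPf : eLpNorm (⇑(P f)) (ENNReal.ofReal p) (volume.restrict Ω) ≤ ENNReal.ofReal A * eLpNorm (⇑f) (ENNReal.ofReal p) (volume.restrict Ω) := by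
      have h1 : ‖P f‖ ≤ A * ‖f‖ :=
        le_trans (P.le_opNorm f) (mul_le_mul_of_nonneg_right hA (norm_nonneg f))
      calc eLpNorm (⇑(P f)) (ENNReal.ofReal p) (volume.restrict Ω) = ENNReal.ofReal ‖P f‖ := by
            rw [Lp.norm_def, ENNReal.ofReal_toReal (Lp.eLpNorm_ne_top _)]
        _ ≤ ENNReal.ofReal (A * ‖f‖) := ENNReal.ofReal_le_ofReal h1
        _ = ENNReal.ofReal A * ENNReal.ofReal ‖f‖ := ENNReal.ofReal_mul hA0
        _ = ENNReal.ofReal A * eLpNorm (⇑f) (ENNReal.ofReal p) (volume.restrict Ω) := by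
            rw [Lp.norm_def, ENNReal.ofReal_toReal (Lp.eLpNorm_ne_top _)]
    have hdiffb := hPB f
    have hrw : (fun x => P f x -
        ∑ j ∈ F, (∫ x in Ω, u j (φ x) * f x * |(Dφ x).det|) * u j (φ x))
        = fun x => P f x - S (φ x) := by
      funext x
      congr 1
      exact Finset.sum_congr rfl fun j _ => by rw [hcoef j]
    rw [hrw] at hdiffb
    have htri : eLpNorm (fun x => S (φ x)) (ENNReal.ofReal p) (volume.restrict Ω)
        ≤ eLpNorm (⇑(P f)) (ENNReal.ofReal p) (volume.restrict Ω) + eLpNorm (fun x => P f x - S (φ x)) (ENNReal.ofReal p) (volume.restrict Ω) := by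
      have := eLpNorm_sub_le (Lp.aestronglyMeasurable (P f))
        ((Lp.aestronglyMeasurable (P f)).sub hSφ) hp1E (μ := (volume.restrict Ω))
      have heq : (⇑(P f) - (⇑(P f) - fun x => S (φ x))) = fun x => S (φ x) := by
        funext x; simp
      have heq2 : (⇑(P f) - fun x => S (φ x)) = fun x => P f x - S (φ x) := by
        funext x; simp
      rwa [heq, heq2] at this
    calc eLpNorm (fun x => S (φ x)) (ENNReal.ofReal p) (volume.restrict Ω)
        ≤ eLpNorm (⇑(P f)) (ENNReal.ofReal p) (volume.restrict Ω) + eLpNorm (fun x => P f x - S (φ x)) (ENNReal.ofReal p) (volume.restrict Ω) := htri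
      _ ≤ ENNReal.ofReal A * eLpNorm (⇑f) (ENNReal.ofReal p) (volume.restrict Ω) + ENNReal.ofReal B * eLpNorm (⇑f) (ENNReal.ofReal p) (volume.restrict Ω) :=
          add_le_add hPf hdiffb
      _ = ENNReal.ofReal (A + B) * eLpNorm (⇑f) (ENNReal.ofReal p) (volume.restrict Ω) := by
          rw [ENNReal.ofReal_add hA0 hB, add_mul]
      _ = ENNReal.ofReal (A + B) * eLpNorm (fun x => g' (φ x)) (ENNReal.ofReal p) (volume.restrict Ω) := by
          rw [eLpNorm_congr_ae hf_ae]
  -- put everything together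
  have hup1 : (0:ℝ) ≤ 1 / p := by positivity
  have himg : ∫⁻ y in φ '' Ω, (‖S y‖₊ : ℝ≥0∞) ^ p
      ≤ ENNReal.ofReal M * ∫⁻ x in Ω, (‖S (φ x)‖₊ : ℝ≥0∞) ^ p := by
    rw [CoVl fun y => (‖S y‖₊ : ℝ≥0∞) ^ p,
      ← lintegral_const_mul' _ _ ENNReal.ofReal_ne_top]
    refine lintegral_mono_ae ?_
    rw [ae_restrict_iff' hΩ]
    exact Filter.Eventually.of_forall fun x hx =>
      mul_le_mul_left (ENNReal.ofReal_le_ofReal (hM' x hx)) _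
  have hstep : ∫⁻ y in φ '' Ω, (‖S y‖₊ : ℝ≥0∞) ^ p
      ≤ ENNReal.ofReal M * (ENNReal.ofReal (A + B)) ^ p *
        ((ENNReal.ofReal m)⁻¹ * ∫⁻ y in φ '' Ω, (‖g' y‖₊ : ℝ≥0∞) ^ p) := by
    refine himg.trans ?_
    rw [mul_assoc]
    refine mul_le_mul_right ?_ _
    calc ∫⁻ x in Ω, (‖S (φ x)‖₊ : ℝ≥0∞) ^ p
        = (eLpNorm (fun x => S (φ x)) (ENNReal.ofReal p) (volume.restrict Ω)) ^ p := (pow_eq (volume.restrict Ω) _).symm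
      _ ≤ (ENNReal.ofReal (A + B) * eLpNorm (fun x => g' (φ x)) (ENNReal.ofReal p) (volume.restrict Ω)) ^ p :=
          ENNReal.rpow_le_rpow hmain hp0.le
      _ = (ENNReal.ofReal (A + B)) ^ p * (eLpNorm (fun x => g' (φ x)) (ENNReal.ofReal p) (volume.restrict Ω)) ^ p :=
          ENNReal.mul_rpow_of_nonneg _ _ hp0.le
      _ ≤ (ENNReal.ofReal (A + B)) ^ p *
          ((ENNReal.ofReal m)⁻¹ * ∫⁻ y in φ '' Ω, (‖g' y‖₊ : ℝ≥0∞) ^ p) := by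
          refine mul_le_mul_right ?_ _
          rw [pow_eq (volume.restrict Ω)]
          exact key g'
  have hIg : (∫⁻ y in φ '' Ω, (‖g' y‖₊ : ℝ≥0∞) ^ p) ^ (1 / p)
      = eLpNorm g (ENNReal.ofReal p) (volume.restrict (φ '' Ω)) := by
    rw [← norm_eq]
    exact (eLpNorm_congr_ae hgg').symm
  have hconst : ENNReal.ofReal ((M / m) ^ (1 / p) * (A + B))
      = ENNReal.ofReal M ^ (1 / p) * ((ENNReal.ofReal m)⁻¹) ^ (1 / p) *
        ENNReal.ofReal (A + B) := by
    rw [ENNReal.ofReal_mul (by positivity), ← ENNReal.ofReal_rpow_of_pos (div_pos hM0 hm),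
      ENNReal.ofReal_div_of_pos hm, div_eq_mul_inv,
      ENNReal.mul_rpow_of_nonneg _ _ hup1]
  calc eLpNorm S (ENNReal.ofReal p) (volume.restrict (φ '' Ω))
      = (∫⁻ y in φ '' Ω, (‖S y‖₊ : ℝ≥0∞) ^ p) ^ (1 / p) := norm_eq _ _
    _ ≤ (ENNReal.ofReal M * (ENNReal.ofReal (A + B)) ^ p *
          ((ENNReal.ofReal m)⁻¹ * ∫⁻ y in φ '' Ω, (‖g' y‖₊ : ℝ≥0∞) ^ p)) ^ (1 / p) :=
        ENNReal.rpow_le_rpow hstep hup1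
    _ = ENNReal.ofReal M ^ (1 / p) * ((ENNReal.ofReal m)⁻¹) ^ (1 / p) *
        ENNReal.ofReal (A + B) *
        ((∫⁻ y in φ '' Ω, (‖g' y‖₊ : ℝ≥0∞) ^ p) ^ (1 / p)) := by
        rw [ENNReal.mul_rpow_of_nonneg _ _ hup1, ENNReal.mul_rpow_of_nonneg _ _ hup1,
          ENNReal.mul_rpow_of_nonneg _ _ hup1, ← ENNReal.rpow_mul (ENNReal.ofReal (A + B)),
          mul_one_div, div_self hp0.ne', ENNReal.rpow_one]
        ring
    _ = ENNReal.ofReal ((M / m) ^ (1 / p) * (A + B)) *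
        eLpNorm g (ENNReal.ofReal p) (volume.restrict (φ '' Ω)) := by
        rw [hconst, hIg]
end
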